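/- For every N≥0, the function V^N = 𝕄^N h : S^M → [0,∞) is continuous. -/

import Mathlib

/-!
Induction on `N`: `𝕄` preserves continuity and nonnegativity on the simplex. The integrand of
`T g` at `π` is the perspective `(∑ y) · g(y / ∑ y)` of `g` evaluated at `y = (D_i(π, x))_i`.
For `g` continuous on the compact simplex this perspective is continuous on the nonnegative
orthant: it is bounded by `sup |g| · ∑ y`, which handles the points where `∑ y = 0`. Since
`D_i(π, x)` is affine in `π` and bounded by `2 f_i(x)` on the simplex, dominated convergence
makes `T g` continuous.
-/

open MeasureTheory Finset Filter
open scoped ENNReal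

noncomputable section

/-- The analytic data of the change-diagnosis problem: a σ-finite reference measure `m`
on the observation space, probability densities `f₀, …, f_M`, the geometric parameter
`p ∈ (0,1)`, the prior `ν` on the change index, the delay cost `c > 0` and the
terminal-decision costs `a_{ij}` (with `a_{ii} = 0`). -/
structure DiagSetup (E : Type*) [MeasurableSpace E] (M : ℕ) : Type _ where
  /-- σ-finite reference measure -/
  m : Measure E
  hm : SigmaFinite m
  /-- `f 0` is the pre-change density, `f i.succ` the post-change densities -/
  f : Fin (M + 1) → E → ℝ
  hf_meas : ∀ i, Measurable (f i)
  hf_nonneg : ∀ i x, 0 ≤ f i x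
  hf_int : ∀ i, ∫ x, f i x ∂m = 1
  p : ℝ
  hp : p ∈ Set.Ioo (0 : ℝ) 1
  ν : Fin M → ℝ
  hν : ∀ i, 0 < ν i
  hνsum : ∑ i, ν i = 1
  c : ℝ
  hc : 0 < c
  a : Fin (M + 1) → Fin M → ℝ
  ha : ∀ i j, 0 ≤ a i j
  haii : ∀ i : Fin M, a i.succ i = 0
  hM : 1 ≤ M

namespace DiagSetup

variable {E : Type*} [MeasurableSpace E] {M : ℕ}

/-- `D_i(π, x)`:  `D₀(π,x) = (1-p)π₀f₀(x)` and `D_i(π,x) = (π_i + π₀ p ν_i) f_i(x)`. -/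
def D (S : DiagSetup E M) (i : Fin (M + 1)) (π : Fin (M + 1) → ℝ) (x : E) : ℝ :=
  Fin.cases ((1 - S.p) * π 0 * S.f 0 x)
    (fun j => (π j.succ + π 0 * S.p * S.ν j) * S.f j.succ x) i

/-- `D(π, x) = Σ_{i=0}^M D_i(π, x)`. -/
def Dsum (S : DiagSetup E M) (π : Fin (M + 1) → ℝ) (x : E) : ℝ :=
  ∑ i, S.D i π x

/-- The operator `T`:
`(Tg)(π) = ∫_E D(π,x) g(D₀(π,x)/D(π,x), …, D_M(π,x)/D(π,x)) m(dx)`,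
with the integrand interpreted as `0` where `D(π,x) = 0`. -/
def T (S : DiagSetup E M) (g : (Fin (M + 1) → ℝ) → ℝ) (π : Fin (M + 1) → ℝ) : ℝ :=
  ∫ x, (if S.Dsum π x = 0 then 0
        else S.Dsum π x * g fun i => S.D i π x / S.Dsum π x) ∂S.m

/-- `h_j(π) = Σ_{i=0}^M π_i a_{ij}`. -/
def hj (S : DiagSetup E M) (j : Fin M) (π : Fin (M + 1) → ℝ) : ℝ :=
  ∑ i : Fin (M + 1), π i * S.a i j

/-- `h(π) = min_{j∈{1,…,M}} h_j(π)`. -/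
def hmin (S : DiagSetup E M) (π : Fin (M + 1) → ℝ) : ℝ :=
  ⨅ j : Fin M, S.hj j π

/-- The dynamic-programming operator `(𝕄g)(π) = min{h(π), c(1-π₀) + (Tg)(π)}`. -/
def Mop (S : DiagSetup E M) (g : (Fin (M + 1) → ℝ) → ℝ) (π : Fin (M + 1) → ℝ) : ℝ :=
  min (S.hmin π) (S.c * (1 - π 0) + S.T g π)

/-- `V^N = 𝕄^N h`, the value functions of the truncated problems. -/
def V (S : DiagSetup E M) (N : ℕ) : (Fin (M + 1) → ℝ) → ℝ :=
  S.Mop^[N] S.hmin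

end DiagSetup

open Topology

section Perspective

variable {ι : Type*} [Fintype ι] {g : (ι → ℝ) → ℝ}

/-- Extends `g` from the simplex positively homogeneously to the nonnegative orthant; at `y = 0`
the junk value `0 / 0 = 0` makes it vanish, matching the convention in `T`. -/
def perspective (g : (ι → ℝ) → ℝ) (y : ι → ℝ) : ℝ :=
  (∑ i, y i) * g fun i => y i / ∑ j, y j

lemma normalize_mem_stdSimplex {y : ι → ℝ} (hy : 0 ≤ y) (hsum : ∑ i, y i ≠ 0) :
    (fun i => y i / ∑ j, y j) ∈ stdSimplex ℝ ι :=
  ⟨fun i => div_nonneg (hy i) (Finset.sum_nonneg fun j _ => hy j), by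
    rw [← Finset.sum_div, div_self hsum]⟩

lemma perspective_eqOn {g' : (ι → ℝ) → ℝ} (h : Set.EqOn g g' (stdSimplex ℝ ι)) :
    Set.EqOn (perspective g) (perspective g') (Set.Ici 0) := by
  intro y hy
  by_cases hsum : ∑ i, y i = 0
  · simp only [perspective, hsum, zero_mul]
  · simp only [perspective, h (normalize_mem_stdSimplex hy hsum)]

lemma perspective_nonneg (hg : ∀ z ∈ stdSimplex ℝ ι, 0 ≤ g z) {y : ι → ℝ} (hy : 0 ≤ y) :
    0 ≤ perspective g y := by
  by_cases hsum : ∑ i, y i = 0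
  · simp only [perspective, hsum, zero_mul, le_refl]
  · exact mul_nonneg (Finset.sum_nonneg fun i _ => hy i)
      (hg _ (normalize_mem_stdSimplex hy hsum))

lemma norm_perspective_le {B : ℝ} (hB : ∀ z ∈ stdSimplex ℝ ι, ‖g z‖ ≤ B) {y : ι → ℝ}
    (hy : 0 ≤ y) : ‖perspective g y‖ ≤ B * ∑ i, y i := by
  have hsum_nonneg : 0 ≤ ∑ i, y i := Finset.sum_nonneg fun i _ => hy i
  by_cases hsum : ∑ i, y i = 0
  · simp only [perspective, hsum, zero_mul, norm_zero, mul_zero, le_refl]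
  · rw [perspective, norm_mul, Real.norm_of_nonneg hsum_nonneg, mul_comm]
    exact mul_le_mul_of_nonneg_right (hB _ (normalize_mem_stdSimplex hy hsum)) hsum_nonneg

lemma measurable_perspective (hg : Measurable g) : Measurable (perspective g) := by
  unfold perspective
  fun_prop

lemma ContinuousOn.measurable_perspective_comp {α : Type*} [MeasurableSpace α]
    (hg : ContinuousOn g (stdSimplex ℝ ι)) {u : α → ι → ℝ} (hu : Measurable u)
    (hu_nonneg : ∀ a, 0 ≤ u a) : Measurable fun a => perspective g (u a) := by
  classical
  set g' := (stdSimplex ℝ ι).piecewise g 0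
  have hg' : Measurable g' :=
    hg.measurable_piecewise continuousOn_const (isClosed_stdSimplex ℝ ι).measurableSet
  have hcongr : (fun a => perspective g (u a)) = perspective g' ∘ u :=
    funext fun a => perspective_eqOn (fun z hz => (Set.piecewise_eq_of_mem _ _ _ hz).symm)
      (Set.mem_Ici.mpr (hu_nonneg a))
  exact hcongr ▸ (measurable_perspective hg').comp hu

lemma continuousOn_perspective (hg : ContinuousOn g (stdSimplex ℝ ι)) :
    ContinuousOn (perspective g) (Set.Ici 0) := by
  intro y₀ hy₀
  have hsum_cont : Continuous fun y : ι → ℝ => ∑ i, y i := by fun_prop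
  by_cases hsum : ∑ i, y₀ i = 0
  · obtain ⟨B, hB⟩ := (isCompact_stdSimplex ℝ ι).exists_bound_of_continuousOn hg
    have hbound : ∀ᶠ y in 𝓝[Set.Ici 0] y₀, ‖perspective g y‖ ≤ B * ∑ i, y i :=
      eventually_mem_nhdsWithin.mono fun y hy => norm_perspective_le hB hy
    have hlim : Tendsto (fun y : ι → ℝ => B * ∑ i, y i) (𝓝[Set.Ici 0] y₀) (𝓝 0) := by
      simpa only [hsum, mul_zero] using
        ((hsum_cont.tendsto y₀).const_mul B).mono_left nhdsWithin_le_nhds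
    simpa only [ContinuousWithinAt, perspective, hsum, zero_mul] using
      squeeze_zero_norm' hbound hlim
  · have hopen : {y : ι → ℝ | ∑ i, y i ≠ 0} ∈ 𝓝 y₀ :=
      (isOpen_ne_fun hsum_cont continuous_const).mem_nhds hsum
    rw [← continuousWithinAt_inter hopen]
    have hnormalize : ContinuousAt (fun y : ι → ℝ => fun i => y i / ∑ j, y j) y₀ :=
      continuousAt_pi.mpr fun i =>
        (continuous_apply i).continuousAt.div hsum_cont.continuousAt hsum
    exact hsum_cont.continuousWithinAt.mul <|
      (hg _ (normalize_mem_stdSimplex hy₀ hsum)).comp hnormalize.continuousWithinAt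
        fun y hy => normalize_mem_stdSimplex hy.1 hy.2

end Perspective

namespace DiagSetup

variable {E : Type*} [MeasurableSpace E] {M : ℕ} (S : DiagSetup E M)

lemma T_eq_integral_perspective (g : (Fin (M + 1) → ℝ) → ℝ) (π : Fin (M + 1) → ℝ) :
    S.T g π = ∫ x, perspective g (fun i => S.D i π x) ∂S.m := by
  refine integral_congr_ae (ae_of_all _ fun x => ?_)
  by_cases hx : ∑ i, S.D i π x = 0
  · simp only [Dsum, perspective, hx, zero_mul, if_true]
  · simp only [Dsum, perspective, hx, if_false]

lemma D_nonneg (i : Fin (M + 1)) {π : Fin (M + 1) → ℝ}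
    (hπ : π ∈ stdSimplex ℝ (Fin (M + 1))) (x : E) : 0 ≤ S.D i π x := by
  have hp := S.hp
  induction i using Fin.cases with
  | zero =>
      simp only [D, Fin.cases_zero]
      exact mul_nonneg (mul_nonneg (by linarith [hp.2]) (hπ.1 0)) (S.hf_nonneg 0 x)
  | succ j =>
      simp only [D, Fin.cases_succ]
      exact mul_nonneg (add_nonneg (hπ.1 j.succ)
        (mul_nonneg (mul_nonneg (hπ.1 0) hp.1.le) (S.hν j).le)) (S.hf_nonneg j.succ x)

lemma D_le (i : Fin (M + 1)) {π : Fin (M + 1) → ℝ}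
    (hπ : π ∈ stdSimplex ℝ (Fin (M + 1))) (x : E) : S.D i π x ≤ 2 * S.f i x := by
  have hp := S.hp
  have hπ_le (k : Fin (M + 1)) : π k ≤ 1 := (mem_Icc_of_mem_stdSimplex hπ k).2
  induction i using Fin.cases with
  | zero =>
      simp only [D, Fin.cases_zero]
      refine mul_le_mul_of_nonneg_right ?_ (S.hf_nonneg 0 x)
      nlinarith [hπ.1 0, hπ_le 0, hp.1]
  | succ j =>
      simp only [D, Fin.cases_succ]
      refine mul_le_mul_of_nonneg_right ?_ (S.hf_nonneg j.succ x)
      have hν_le : S.ν j ≤ 1 :=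
        S.hνsum ▸ Finset.single_le_sum (fun k _ => (S.hν k).le) (Finset.mem_univ j)
      have : π 0 * S.p * S.ν j ≤ 1 :=
        mul_le_one₀ (mul_le_one₀ (hπ_le 0) hp.1.le hp.2.le) (S.hν j).le hν_le
      linarith [hπ_le j.succ]

lemma continuous_D (i : Fin (M + 1)) (x : E) : Continuous fun π => S.D i π x := by
  induction i using Fin.cases with
  | zero => unfold D; simp only [Fin.cases_zero]; fun_prop
  | succ j => unfold D; simp only [Fin.cases_succ]; fun_prop

lemma measurable_D (i : Fin (M + 1)) (π : Fin (M + 1) → ℝ) : Measurable (S.D i π) := by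
  have := S.hf_meas
  induction i using Fin.cases with
  | zero => unfold D; simp only [Fin.cases_zero]; fun_prop
  | succ j => unfold D; simp only [Fin.cases_succ]; fun_prop

lemma integrable_f (i : Fin (M + 1)) : Integrable (S.f i) S.m :=
  Integrable.of_integral_ne_zero (by simp [S.hf_int i])

lemma continuousOn_T {g : (Fin (M + 1) → ℝ) → ℝ}
    (hg : ContinuousOn g (stdSimplex ℝ (Fin (M + 1)))) :
    ContinuousOn (S.T g) (stdSimplex ℝ (Fin (M + 1))) := by
  obtain ⟨B, hB⟩ := (isCompact_stdSimplex ℝ (Fin (M + 1))).exists_bound_of_continuousOn hg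
  intro π₀ hπ₀
  rw [show S.T g = fun π => ∫ x, perspective g (fun i => S.D i π x) ∂S.m from
    funext (S.T_eq_integral_perspective g)]
  refine continuousWithinAt_of_dominated (bound := fun x => B * ∑ i, 2 * S.f i x) ?_ ?_ ?_ ?_
  · refine eventually_mem_nhdsWithin.mono fun π hπ => ?_
    exact (hg.measurable_perspective_comp (measurable_pi_lambda _ fun i => S.measurable_D i π)
      fun x i => S.D_nonneg i hπ x).aestronglyMeasurable
  · refine eventually_mem_nhdsWithin.mono fun π hπ => ae_of_all _ fun x => ?_
    have hB_nonneg : 0 ≤ B := (norm_nonneg _).trans (hB π hπ)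
    calc ‖perspective g fun i => S.D i π x‖ ≤ B * ∑ i, S.D i π x :=
          norm_perspective_le hB fun i => S.D_nonneg i hπ x
      _ ≤ B * ∑ i, 2 * S.f i x :=
          mul_le_mul_of_nonneg_left (Finset.sum_le_sum fun i _ => S.D_le i hπ x) hB_nonneg
  · exact (integrable_finsetSum _ fun i _ => (S.integrable_f i).const_mul 2).const_mul B
  · refine ae_of_all _ fun x => ?_
    have hD : Continuous fun π i => S.D i π x := continuous_pi fun i => S.continuous_D i x
    exact (continuousOn_perspective hg).comp hD.continuousOn
      (fun π hπ => Set.mem_Ici.mpr fun i => S.D_nonneg i hπ x) π₀ hπ₀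

lemma T_nonneg {g : (Fin (M + 1) → ℝ) → ℝ} (hg : ∀ π ∈ stdSimplex ℝ (Fin (M + 1)), 0 ≤ g π)
    {π : Fin (M + 1) → ℝ} (hπ : π ∈ stdSimplex ℝ (Fin (M + 1))) : 0 ≤ S.T g π := by
  rw [T_eq_integral_perspective]
  exact integral_nonneg fun x => perspective_nonneg hg fun i => S.D_nonneg i hπ x

lemma continuous_hmin : Continuous S.hmin := by
  have : Nonempty (Fin M) := Fin.pos_iff_nonempty.mp S.hM
  have hinf : S.hmin = fun π => Finset.univ.inf' Finset.univ_nonempty fun j => S.hj j π :=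
    funext fun π => (Finset.inf'_univ_eq_ciInf _).symm
  rw [hinf]
  exact Continuous.finset_inf'_apply _ fun j _ => by unfold hj; fun_prop

lemma hmin_nonneg {π : Fin (M + 1) → ℝ} (hπ : π ∈ stdSimplex ℝ (Fin (M + 1))) :
    0 ≤ S.hmin π :=
  Real.iInf_nonneg fun j => Finset.sum_nonneg fun i _ => mul_nonneg (hπ.1 i) (S.ha i j)

lemma continuousOn_Mop {g : (Fin (M + 1) → ℝ) → ℝ}
    (hg : ContinuousOn g (stdSimplex ℝ (Fin (M + 1)))) :
    ContinuousOn (S.Mop g) (stdSimplex ℝ (Fin (M + 1))) :=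
  ContinuousOn.inf S.continuous_hmin.continuousOn <|
    (by fun_prop : Continuous fun π : Fin (M + 1) → ℝ => S.c * (1 - π 0)).continuousOn.add
      (S.continuousOn_T hg)

lemma Mop_nonneg {g : (Fin (M + 1) → ℝ) → ℝ} (hg : ∀ π ∈ stdSimplex ℝ (Fin (M + 1)), 0 ≤ g π)
    {π : Fin (M + 1) → ℝ} (hπ : π ∈ stdSimplex ℝ (Fin (M + 1))) : 0 ≤ S.Mop g π :=
  le_min (S.hmin_nonneg hπ) <| add_nonneg
    (mul_nonneg S.hc.le (sub_nonneg.mpr (mem_Icc_of_mem_stdSimplex hπ 0).2)) (S.T_nonneg hg hπ)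

lemma V_succ (N : ℕ) : S.V (N + 1) = S.Mop (S.V N) :=
  Function.iterate_succ_apply' _ _ _

lemma continuousOn_V (N : ℕ) : ContinuousOn (S.V N) (stdSimplex ℝ (Fin (M + 1))) := by
  induction N with
  | zero => exact S.continuous_hmin.continuousOn
  | succ N ih => rw [V_succ]; exact S.continuousOn_Mop ih

lemma V_nonneg (N : ℕ) {π : Fin (M + 1) → ℝ} (hπ : π ∈ stdSimplex ℝ (Fin (M + 1))) :
    0 ≤ S.V N π := by
  induction N generalizing π with
  | zero => exact S.hmin_nonneg hπ
  | succ N ih => rw [V_succ]; exact S.Mop_nonneg (fun _ hπ' => ih hπ') hπ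

end DiagSetup

/-- for every `N ≥ 0`, the truncated value function `V^N = 𝕄^N h` is a
continuous nonnegative function on the simplex `S^M`. -/
theorem truncated_value_function_continuous {E : Type*} [MeasurableSpace E] {M : ℕ}
    (S : DiagSetup E M) (N : ℕ) :
    ContinuousOn (S.V N) (stdSimplex ℝ (Fin (M + 1))) ∧
    ∀ π ∈ stdSimplex ℝ (Fin (M + 1)), 0 ≤ S.V N π :=
  ⟨S.continuousOn_V N, fun _ hπ => S.V_nonneg N hπ⟩
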